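/- Let γ > 0 be a real number and let s be a complex number with Re s > 2. Then ∑_{m,n≥0} (γ + 2m + 3n)^{−s} = 6^{−s}·∑_{j=0}^{2} ∑_{k=0}^{1} ( ∑_{ν≥0} (ν + w_{jk})^{−(s−1)} + (1 − w_{jk})·∑_{ν≥0} (ν + w_{jk})^{−s} ), where w_{jk} = γ/6 + j/3 + k/2. -/

import Mathlib

/-!
Write `m = 3a + j` and `n = 2b + k` with `j < 3`, `k < 2`; then `γ + 2m + 3n = 6 (a + b + w_{jk})`.
For fixed residues exactly `ν + 1` pairs `(a, b)` have `a + b = ν`, and splitting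
`ν + 1 = (ν + w_{jk}) + (1 - w_{jk})` turns `∑_ν (ν + 1) (ν + w_{jk})^{-s}` into the two
Hurwitz series.
-/

open Complex Finset

section NormedGroup

variable {E : Type*} [NormedAddCommGroup E]

lemma tsum_antidiagonal_comp_add {M : Type*} [AddCommMonoid M] [TopologicalSpace M]
    (g : ℕ → M) (n : ℕ) : ∑' c : antidiagonal n, g (c.1.1 + c.1.2) = (n + 1) • g n := by
  rw [tsum_fintype, Finset.sum_congr rfl fun c _ => by rw [mem_antidiagonal.mp c.2],
    sum_const, card_univ, Fintype.card_coe, Nat.card_antidiagonal]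

lemma summable_norm_comp_add_prod {f : ℕ → E} (hf : Summable fun n => (n + 1) * ‖f n‖) :
    Summable fun p : ℕ × ℕ => ‖f (p.1 + p.2)‖ := by
  refine (HasAntidiagonal.sigmaAntidiagonalEquivProd.summable_iff
    (f := fun p : ℕ × ℕ => ‖f (p.1 + p.2)‖)).mp ?_
  simp only [Function.comp_def, HasAntidiagonal.sigmaAntidiagonalEquivProd_apply]
  rw [summable_sigma_of_nonneg fun _ => norm_nonneg _]
  refine ⟨fun n => Summable.of_finite, ?_⟩
  simpa only [tsum_antidiagonal_comp_add (fun n => ‖f n‖), nsmul_eq_mul, Nat.cast_add,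
    Nat.cast_one] using hf

lemma tsum_comp_add_prod [CompleteSpace E] {f : ℕ → E}
    (hf : Summable fun n => (n + 1) * ‖f n‖) :
    ∑' p : ℕ × ℕ, f (p.1 + p.2) = ∑' n, (n + 1) • f n := by
  have hsum : Summable fun x : Σ n, antidiagonal n => f (x.2.1.1 + x.2.1.2) :=
    (HasAntidiagonal.sigmaAntidiagonalEquivProd.summable_iff
      (f := fun p : ℕ × ℕ => f (p.1 + p.2))).mpr (summable_norm_comp_add_prod hf).of_norm
  rw [← HasAntidiagonal.sigmaAntidiagonalEquivProd.tsum_eq]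
  exact hsum.tsum_sigma.trans (tsum_congr (tsum_antidiagonal_comp_add f))

lemma tsum_mul_add_mul_prod [CompleteSpace E] (p q : ℕ) [NeZero p] [NeZero q] {F : ℕ → E}
    (hF : ∀ j < q, ∀ k < p, Summable fun n : ℕ => (n + 1) * ‖F (p * q * n + p * j + q * k)‖) :
    ∑' mn : ℕ × ℕ, F (p * mn.1 + q * mn.2) =
      ∑ j ∈ range q, ∑ k ∈ range p, ∑' n : ℕ, (n + 1) • F (p * q * n + p * j + q * k) := by
  let e : (Fin q × Fin p) × (ℕ × ℕ) ≃ ℕ × ℕ :=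
    ((Equiv.prodComm _ _).trans (Equiv.prodProdProdComm _ _ _ _)).trans
      ((Nat.divModEquiv q).prodCongr (Nat.divModEquiv p)).symm
  let G : Fin q × Fin p → ℕ → E := fun jk n => F (p * q * n + p * jk.1 + q * jk.2)
  have hFe : ∀ x, F (p * (e x).1 + q * (e x).2) = G x.1 (x.2.1 + x.2.2) := by
    rintro ⟨⟨j, k⟩, ⟨a, b⟩⟩
    simp only [e, G, Equiv.trans_apply, Equiv.prodComm_apply, Prod.swap_prod_mk,
      Equiv.prodProdProdComm_apply, Equiv.prodCongr_symm, Equiv.prodCongr_apply, Prod.map,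
      Nat.divModEquiv_symm_apply]
    congr 1; ring
  have hsum : Summable fun x : (Fin q × Fin p) × (ℕ × ℕ) => G x.1 (x.2.1 + x.2.2) := by
    refine Summable.of_norm ?_
    rw [summable_prod_of_nonneg fun _ => norm_nonneg _]
    exact ⟨fun jk => summable_norm_comp_add_prod (f := G jk) (hF _ jk.1.2 _ jk.2.2),
      Summable.of_finite⟩
  calc ∑' mn : ℕ × ℕ, F (p * mn.1 + q * mn.2)
      = ∑' x : (Fin q × Fin p) × (ℕ × ℕ), G x.1 (x.2.1 + x.2.2) := by
        rw [← e.tsum_eq]; exact tsum_congr hFe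
    _ = ∑ jk : Fin q × Fin p, ∑' ab : ℕ × ℕ, G jk (ab.1 + ab.2) := by
        rw [hsum.tsum_prod, tsum_fintype]
    _ = ∑ j : Fin q, ∑ k : Fin p, ∑' n : ℕ, (n + 1) • G (j, k) n := by
        rw [Fintype.sum_prod_type]
        exact Finset.sum_congr rfl fun j _ => Finset.sum_congr rfl fun k _ =>
          tsum_comp_add_prod (f := G (j, k)) (hF _ j.2 _ k.2)
    _ = _ := by simp only [G, Finset.sum_range]

end NormedGroup

lemma summable_nat_add_cpow {w : ℝ} (hw : 0 < w) {s : ℂ} (hs : 1 < s.re) :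
    Summable fun n : ℕ => ((n : ℂ) + w) ^ (-s) := by
  refine Summable.of_norm (((Real.summable_one_div_nat_add_rpow w s.re).mpr hs).congr fun n => ?_)
  have hpos : 0 < (n : ℝ) + w := by positivity
  rw [abs_of_pos hpos, one_div, ← Real.rpow_neg hpos.le, ← neg_re,
    ← norm_cpow_eq_rpow_re_of_pos hpos]
  push_cast
  rfl

lemma add_one_mul_cpow_eq {c w : ℝ} (hc : 0 ≤ c) {x : ℝ} (hx : 0 < x + w) (s : ℂ) :
    ((x : ℂ) + 1) * ((c : ℂ) * (x + w)) ^ (-s) =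
      (c : ℂ) ^ (-s) * (((x : ℂ) + w) ^ (-(s - 1)) + (1 - w) * ((x : ℂ) + w) ^ (-s)) := by
  have hxw : ((x : ℂ) + w) = ((x + w : ℝ) : ℂ) := by push_cast; rfl
  have hne : ((x + w : ℝ) : ℂ) ≠ 0 := by exact_mod_cast hx.ne'
  rw [hxw, mul_cpow_ofReal_nonneg hc hx.le, show -(s - 1) = 1 + -s by ring,
    cpow_add _ _ hne, cpow_one]
  push_cast
  ring

lemma hasSum_add_one_mul_cpow {c w : ℝ} (hc : 0 ≤ c) (hw : 0 < w) {s : ℂ} (hs : 2 < s.re) :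
    HasSum (fun n : ℕ => ((n : ℂ) + 1) * ((c : ℂ) * (n + w)) ^ (-s))
      ((c : ℂ) ^ (-s) * ((∑' n : ℕ, ((n : ℂ) + w) ^ (-(s - 1))) +
        (1 - w) * ∑' n : ℕ, ((n : ℂ) + w) ^ (-s))) := by
  have h₁ := (summable_nat_add_cpow hw (s := s - 1) (by simp; linarith)).hasSum
  have h₂ := (summable_nat_add_cpow hw (s := s) (by linarith)).hasSum
  have hterm : (fun n : ℕ => ((n : ℂ) + 1) * ((c : ℂ) * (n + w)) ^ (-s)) = fun n : ℕ =>
      (c : ℂ) ^ (-s) * (((n : ℂ) + w) ^ (-(s - 1)) + (1 - w) * ((n : ℂ) + w) ^ (-s)) :=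
    funext fun n => by exact_mod_cast add_one_mul_cpow_eq hc (by positivity : 0 < (n : ℝ) + w) s
  rw [hterm]
  exact (h₁.add (h₂.mul_left (1 - (w : ℂ)))).mul_left ((c : ℂ) ^ (-s))

lemma summable_add_one_mul_norm_cpow {c w : ℝ} (hc : 0 < c) (hw : 0 < w) {s : ℂ}
    (hs : 2 < s.re) : Summable fun n : ℕ => (n + 1) * ‖((c : ℂ) * (n + w)) ^ (-s)‖ := by
  -- the norm of a positive real to the power `-s` only sees `s.re`
  have h := (summable_norm_iff.mpr
    (hasSum_add_one_mul_cpow hc.le hw (s := s.re) (by simpa using hs)).summable)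
  refine h.congr fun n => ?_
  have hpos : 0 < c * (n + w) := by positivity
  have hcw : (c : ℂ) * (n + w) = ((c * (n + w) : ℝ) : ℂ) := by push_cast; rfl
  rw [norm_mul, hcw, norm_cpow_eq_rpow_re_of_pos hpos, norm_cpow_eq_rpow_re_of_pos hpos]
  norm_cast

theorem barnes_two_three_hurwitz_reduction (γ : ℝ) (hγ : 0 < γ) (s : ℂ) (hs : 2 < s.re) :
    ∑' mn : ℕ × ℕ, ((γ : ℂ) + 2 * mn.1 + 3 * mn.2) ^ (-s) =
      (6 : ℂ) ^ (-s) *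
        ∑ j ∈ Finset.range 3, ∑ k ∈ Finset.range 2,
          ((∑' ν : ℕ, ((ν : ℂ) + (γ / 6 + j / 3 + k / 2 : ℝ)) ^ (-(s - 1))) +
            (1 - ((γ / 6 + j / 3 + k / 2 : ℝ) : ℂ)) *
              ∑' ν : ℕ, ((ν : ℂ) + (γ / 6 + j / 3 + k / 2 : ℝ)) ^ (-s)) := by
  let F : ℕ → ℂ := fun t => ((γ : ℂ) + t) ^ (-s)
  have hw : ∀ j k : ℕ, 0 < γ / 6 + j / 3 + k / 2 := fun j k => by positivity
  have hF : ∀ j k n : ℕ, F (2 * 3 * n + 2 * j + 3 * k) =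
      (((6 : ℝ) : ℂ) * (n + (γ / 6 + j / 3 + k / 2 : ℝ))) ^ (-s) := fun j k n => by
    simp only [F]; push_cast; ring_nf
  calc ∑' mn : ℕ × ℕ, ((γ : ℂ) + 2 * mn.1 + 3 * mn.2) ^ (-s)
      = ∑' mn : ℕ × ℕ, F (2 * mn.1 + 3 * mn.2) := by
        simp only [F, add_assoc, Nat.cast_add, Nat.cast_mul, Nat.cast_ofNat]
    _ = ∑ j ∈ range 3, ∑ k ∈ range 2, ∑' n : ℕ, (n + 1) • F (2 * 3 * n + 2 * j + 3 * k) :=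
        tsum_mul_add_mul_prod 2 3 fun j _ k _ => by
          simpa only [hF] using summable_add_one_mul_norm_cpow (by norm_num) (hw j k) hs
    _ = _ := by
        rw [mul_sum]; refine sum_congr rfl fun j _ => ?_
        rw [mul_sum]; refine sum_congr rfl fun k _ => ?_
        simp only [hF, nsmul_eq_mul, Nat.cast_add, Nat.cast_one]
        rw [(hasSum_add_one_mul_cpow (by norm_num) (hw j k) hs).tsum_eq, ofReal_ofNat]
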